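/- arXiv:0811.0636 — 4 statements merged into one kernel-verified Lean document; each statement's English description precedes it below -/
import Mathlib

section
/- Let R be a commutative ring, M an R-module, and let ι : M → Λ(M) denote the canonical inclusion of M into its exterior algebra. Let u, w ∈ M, let μ ∈ R, let k ≥ 1 be a natural number, and let t ∈ Λ(M) be an element that commutes with ι(w) * ι(u). Then (μ • ι(u)) * (ι(w) * ι(u) + μ • t)^(k-1) = μ^k • (ι(u) * t^(k-1)). -/
/-!
Since `ι u * (ι w * ι u) = 0`, every term of the binomial expansion of `(ι w * ι u + μ • t) ^ (k - 1)`
containing `ι w * ι u` is killed by the left factor `ι u`, leaving `μ • ι u * (μ • t) ^ (k - 1)`.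
-/

open ExteriorAlgebra

theorem mul_add_pow_eq_mul_pow_of_mul_eq_zero {A : Type*} [Semiring A] {x a t : A}
    (hxa : x * a = 0) (hat : Commute a t) (m : ℕ) : x * (a + t) ^ m = x * t ^ m := by
  induction m with
  | zero => rw [pow_zero, pow_zero]
  | succ m ih =>
    have hxta : x * t ^ m * a = 0 := by
      rw [mul_assoc, ← (hat.pow_right m).eq, ← mul_assoc, hxa, zero_mul]
    rw [pow_succ, ← mul_assoc, ih, mul_add, hxta, zero_add, mul_assoc, ← pow_succ]

theorem ExteriorAlgebra.ι_mul_ι_mul_ι_self {R M : Type*} [CommRing R] [AddCommGroup M]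
    [Module R M] (u w : M) : ι R u * (ι R w * ι R u) = 0 := by
  rw [← mul_assoc, eq_neg_of_add_eq_zero_left (ι_add_mul_swap u w), neg_mul, mul_assoc,
    ι_sq_zero, mul_zero, neg_zero]

/-- Homogeneity identity (2.1): if `t` commutes with `ι w * ι u`, then
`(μ • ι u) * (ι w * ι u + μ • t) ^ (k - 1) = μ ^ k • (ι u * t ^ (k - 1))`. -/
theorem bochner_martinelli_homogeneity
    (R : Type*) [CommRing R] (M : Type*) [AddCommGroup M] [Module R M]
    (u w : M) (μ : R) (k : ℕ) (hk : 1 ≤ k) (t : ExteriorAlgebra R M)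
    (ht : Commute (ι R w * ι R u) t) :
    (μ • ι R u) * (ι R w * ι R u + μ • t) ^ (k - 1)
      = μ ^ k • (ι R u * t ^ (k - 1)) := by
  obtain ⟨n, rfl⟩ := Nat.exists_eq_add_of_le' hk
  rw [Nat.add_sub_cancel, smul_mul_assoc,
    mul_add_pow_eq_mul_pow_of_mul_eq_zero (ι_mul_ι_mul_ι_self u w) (ht.smul_right μ), smul_pow,
    mul_smul_comm, smul_smul, pow_succ']
end

section
/- Let R be a commutative ring, M an R-module, and ι : M → Λ(M) the canonical inclusion into the exterior algebra. Let n ≥ 1, let c : Fin n → R, v : Fin n → M, and fix j ∈ Fin n. Then c_j • ∏_{k ≠ j} ι(c_j • v_k − c_k • v_j) = c_j^{n−1} • ∑_{l=0}^{n−1} (−1)^{l+j} c_l • ∏_{m ≠ l} ι(v_m), where each product over a set of indices is taken in increasing order of the indices. -/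
/-! Pass to the free module `R^n` with basis `e`, on which `c` is the linear functional `φ` with
`φ (e k) = c k`, and push everything forward along `e k ↦ v k`. With `y k = c j • e k - c k • e j`,
every `y k` lies in `ker φ`, so contracting `e j ∧ ∏_{k ≠ j} y k` with `φ` (an antiderivation)
gives `c j • ∏_{k ≠ j} y k`. On the other hand, since `e j ∧ e j = 0`,
`e j ∧ ∏_{k ≠ j} y k = c j ^ (n-1) • e j ∧ ∏_{k ≠ j} e k = (-1)^j c j ^ (n-1) • e 0 ∧ ⋯ ∧ e (n-1)`,
and the contraction of the top product is the Euler form `∑ l, (-1)^l c l • ∏_{m ≠ l} e m`. -/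

open ExteriorAlgebra

/-- The product of `g` over the indices in `s`, taken in increasing order of the indices. -/
noncomputable def orderedProd {R M : Type*} [CommRing R] [AddCommGroup M] [Module R M]
    {n : ℕ} (s : Finset (Fin n)) (g : Fin n → ExteriorAlgebra R M) : ExteriorAlgebra R M :=
  ((s.sort (· ≤ ·)).map g).prod

namespace ExteriorAlgebra

variable {R M : Type*} [CommRing R] [AddCommGroup M] [Module R M]

theorem ι_mul_ιMulti_add_smul {m : ℕ} (u : M) (w : Fin m → M) (d : Fin m → R) :
    ι R u * ιMulti R m (fun i => w i + d i • u) = ι R u * ιMulti R m w := by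
  induction m with
  | zero => simp
  | succ m ih =>
    have head : ι R u * ι R (w 0 + d 0 • u) = ι R u * ι R (w 0) := by
      rw [map_add, map_smul, mul_add, mul_smul_comm, ι_sq_zero, smul_zero, add_zero]
    rw [ιMulti_succ_apply, ιMulti_succ_apply, ← mul_assoc, ← mul_assoc, head,
      eq_neg_of_add_eq_zero_left (ι_add_mul_swap u (w 0)), neg_mul, neg_mul, mul_assoc, mul_assoc]
    exact congrArg (fun t => -(ι R (w 0) * t)) (ih (Matrix.vecTail w) (Matrix.vecTail d))

theorem ιMulti_cons {m : ℕ} (u : M) (w : Fin m → M) :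
    ιMulti R (m + 1) (Fin.cons u w) = ι R u * ιMulti R m w := by
  rw [ιMulti_succ_apply, Fin.cons_zero]
  rfl

theorem contractLeft_ιMulti_succ (φ : Module.Dual R M) {m : ℕ} (w : Fin (m + 1) → M) :
    CliffordAlgebra.contractLeft φ (ιMulti R (m + 1) w) =
      ∑ i : Fin (m + 1), ((-1 : R) ^ (i : ℕ) * φ (w i)) • ιMulti R m (i.removeNth w) := by
  induction m with
  | zero =>
    simp [Algebra.algebraMap_eq_smul_one]
  | succ m ih =>
    obtain ⟨a, t, rfl⟩ : ∃ a t, w = Fin.cons a t := ⟨w 0, Fin.tail w, (Fin.cons_self_tail w).symm⟩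
    rw [Fin.sum_univ_succ, ιMulti_cons, CliffordAlgebra.contractLeft_ι_mul, ih, Finset.mul_sum,
      sub_eq_add_neg, ← Finset.sum_neg_distrib]
    congr 1
    · simp
    · refine Finset.sum_congr rfl fun i _ => ?_
      have hrem : i.succ.removeNth (Fin.cons a t : Fin (m + 2) → M) =
          (Fin.cons a (i.removeNth t) : Fin (m + 1) → M) :=
        Fin.cons_comp_succ_succAbove a t i
      rw [hrem, ιMulti_cons, Fin.cons_succ, Fin.val_succ, pow_succ, mul_smul_comm]
      module

theorem ι_mul_ιMulti_removeNth {m : ℕ} (w : Fin (m + 1) → M) (p : Fin (m + 1)) :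
    ι R (w p) * ιMulti R m (p.removeNth w) = (-1 : R) ^ (p : ℕ) • ιMulti R (m + 1) w := by
  calc ι R (w p) * ιMulti R m (p.removeNth w)
      = ιMulti R (m + 1) (Fin.cons (w p) (p.removeNth w)) := (ιMulti_cons _ _).symm
    _ = ιMulti R (m + 1) (w ∘ p.cycleRange.symm) := by
      rw [Fin.cons_removeNth_eq_comp_cycleRange_symm]
    _ = (-1 : R) ^ (p : ℕ) • ιMulti R (m + 1) w := by
      rw [AlternatingMap.map_perm, Equiv.Perm.sign_symm, Fin.sign_cycleRange, Units.smul_def,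
        ← Int.cast_smul_eq_zsmul R]
      push_cast
      rfl

theorem contractLeft_ιMulti_eq_zero (φ : Module.Dual R M) {m : ℕ} {w : Fin m → M}
    (hw : ∀ i, φ (w i) = 0) : CliffordAlgebra.contractLeft φ (ιMulti R m w) = 0 := by
  cases m with
  | zero => simp [CliffordAlgebra.contractLeft_one]
  | succ m =>
    rw [contractLeft_ιMulti_succ]
    simp [hw]

theorem smul_ιMulti_sub_eq_sum (φ : Module.Dual R M) {m : ℕ} (u : Fin (m + 1) → M)
    (j : Fin (m + 1)) :
    φ (u j) • ιMulti R m (fun k => φ (u j) • j.removeNth u k - φ (j.removeNth u k) • u j) =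
      φ (u j) ^ m • ∑ l : Fin (m + 1),
        ((-1 : R) ^ ((l : ℕ) + (j : ℕ)) * φ (u l)) • ιMulti R m (l.removeNth u) := by
  set y := fun k => φ (u j) • j.removeNth u k - φ (j.removeNth u k) • u j
  have hy : ∀ k, φ (y k) = 0 := fun k => by simp only [y, map_sub, map_smul, smul_eq_mul]; ring
  have hwedge : ι R (u j) * ιMulti R m y = (φ (u j) ^ m * (-1) ^ (j : ℕ)) • ιMulti R (m + 1) u :=
    calc ι R (u j) * ιMulti R m y
        = ι R (u j) * ιMulti R m (fun k => φ (u j) • j.removeNth u k) := by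
          simpa only [y, sub_eq_add_neg, neg_smul] using ι_mul_ιMulti_add_smul (u j)
            (fun k => φ (u j) • j.removeNth u k) fun k => -φ (j.removeNth u k)
      _ = φ (u j) ^ m • (ι R (u j) * ιMulti R m (j.removeNth u)) := by
          rw [AlternatingMap.map_smul_univ, Finset.prod_const, Finset.card_univ, Fintype.card_fin,
            mul_smul_comm]
      _ = (φ (u j) ^ m * (-1) ^ (j : ℕ)) • ιMulti R (m + 1) u := by
          rw [ι_mul_ιMulti_removeNth, smul_smul]
  calc φ (u j) • ιMulti R m y
      = CliffordAlgebra.contractLeft φ (ι R (u j) * ιMulti R m y) := by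
        rw [CliffordAlgebra.contractLeft_ι_mul, contractLeft_ιMulti_eq_zero φ hy, mul_zero,
          sub_zero]
    _ = _ := by
        rw [hwedge, map_smul, contractLeft_ιMulti_succ, Finset.smul_sum, Finset.smul_sum]
        refine Finset.sum_congr rfl fun l _ => ?_
        rw [smul_smul, smul_smul, pow_add]
        congr 1
        ring

end ExteriorAlgebra

theorem orderedProd_univ_erase_ι {R M : Type*} [CommRing R] [AddCommGroup M] [Module R M]
    {m : ℕ} (j : Fin (m + 1)) (w : Fin (m + 1) → M) :
    orderedProd (Finset.univ.erase j) (fun k => ι R (w k)) = ιMulti R m (j.removeNth w) := by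
  have hsort : (Finset.univ.erase j).sort (· ≤ ·) = List.ofFn j.succAbove := by
    rw [← Finset.compl_singleton,
      ← Finset.listMap_orderEmbOfFin_finRange (k := m) _ (by simp [Finset.card_compl]),
      Finset.orderEmbOfFin_compl_singleton_eq_succAboveOrderEmb, List.ofFn_eq_map]
    rfl
  rw [orderedProd, hsort, List.map_ofFn]
  rfl

theorem euler_form_identity_general {R M : Type*} [CommRing R] [AddCommGroup M] [Module R M]
    {n : ℕ} (c : Fin n → R) (v : Fin n → M) (j : Fin n) :
    c j • orderedProd (Finset.univ.erase j)
        (fun k => ι R (c j • v k - c k • v j)) =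
      c j ^ (n - 1) •
        ∑ l : Fin n, ((-1 : R) ^ ((l : ℕ) + (j : ℕ)) * c l) •
          orderedProd (Finset.univ.erase l) (fun m => ι R (v m)) := by
  obtain ⟨m, rfl⟩ : ∃ m, n = m + 1 := Nat.exists_eq_add_one.mpr j.pos
  let e : Fin (m + 1) → Fin (m + 1) → R := fun k => Pi.single k 1
  have key := congrArg (ExteriorAlgebra.map (Fintype.linearCombination R v))
    (smul_ιMulti_sub_eq_sum (Fintype.linearCombination R c) e j)
  simp only [orderedProd_univ_erase_ι, Nat.add_sub_cancel]
  unfold Fin.removeNth at key ⊢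
  simpa [e, Function.comp_def] using key

/-- Computational core of Lemma 3.6: for `c : Fin n → R`, `v : Fin n → M` and `j : Fin n`,
`c j • ∏_{k ≠ j} ι (c j • v k - c k • v j)
  = c j ^ (n-1) • ∑ l, (-1)^(l+j) c l • ∏_{m ≠ l} ι (v m)`. -/
theorem euler_form_identity {R M : Type*} [CommRing R] [AddCommGroup M] [Module R M]
    {n : ℕ} (hn : 1 ≤ n) (c : Fin n → R) (v : Fin n → M) (j : Fin n) :
    c j • orderedProd (Finset.univ.erase j)
        (fun k => ι R (c j • v k - c k • v j)) =
      c j ^ (n - 1) •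
        ∑ l : Fin n, ((-1 : R) ^ ((l : ℕ) + (j : ℕ)) * c l) •
          orderedProd (Finset.univ.erase l) (fun m => ι R (v m)) :=
  euler_form_identity_general c v j
end

section
/- Let R be a commutative ring, M an R-module, and ι : M → Λ(M) the canonical inclusion into the exterior algebra. Let n ≥ 1 and let c : Fin n → R and w, e : Fin n → M. Then (∑_{i} c_i • ι(e_i)) * (∑_{i} ι(w_i) * ι(e_i))^{n−1} = (n−1)! • ∑_{k} c_k • ( ι(e_k) * ∏_{i ≠ k} (ι(w_i) * ι(e_i)) ), where the product over i ≠ k is taken in increasing order of i (the factors ι(w_i) * ι(e_i) pairwise commute, so the order is immaterial). -/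
/-!
The two-forms `gᵢ = ι wᵢ * ι eᵢ` are even, so they commute with each other and with every `ι x`,
and `gᵢ² = 0`, `ι eᵢ * gᵢ = 0`. Inside the commutative subalgebra they generate, the power
`(∑ gᵢ)^(n-1)` therefore expands as `(n-1)!` times the sum of the square-free monomials of degree
`n - 1`, i.e. of the products `∏_{i ≠ k} gᵢ`. Multiplying by `∑ cⱼ ι eⱼ`, the term `ι eⱼ` kills
every monomial containing `gⱼ`, so only `j = k` survives.
-/

open ExteriorAlgebra

open Finset

theorem add_pow_succ_of_mul_self_eq_zero {A : Type*} [CommSemiring A] {x y : A}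
    (hx : x * x = 0) (k : ℕ) : (x + y) ^ (k + 1) = y ^ (k + 1) + (k + 1) • (x * y ^ k) := by
  induction k with
  | zero => simp [add_comm]
  | succ k ih =>
    rw [pow_succ, ih, add_mul, smul_mul_assoc, mul_add (x * y ^ k), mul_right_comm x _ x, hx,
      zero_mul, zero_add]
    ring

namespace Finset

variable {α : Type*} [DecidableEq α]

theorem sum_powersetCard_succ_insert {A : Type*} [AddCommMonoid A] {a : α} {s : Finset α}
    (ha : a ∉ s) (k : ℕ) (F : Finset α → A) :
    ∑ t ∈ (insert a s).powersetCard (k + 1), F t =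
      ∑ t ∈ s.powersetCard (k + 1), F t + ∑ t ∈ s.powersetCard k, F (insert a t) := by
  rw [powersetCard_succ_insert ha, sum_union, sum_image]
  · intro t ht u hu htu
    rw [← erase_insert (notMem_mono (mem_powersetCard.1 ht).1 ha), htu,
      erase_insert (notMem_mono (mem_powersetCard.1 hu).1 ha)]
  · refine disjoint_left.2 fun t ht htu => ?_
    obtain ⟨u, -, rfl⟩ := mem_image.1 htu
    exact ha ((mem_powersetCard.1 ht).1 (mem_insert_self a u))

theorem sum_powersetCard_card_sub_one {A : Type*} [AddCommMonoid A] {s : Finset α}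
    (hs : s.Nonempty) (F : Finset α → A) :
    ∑ t ∈ s.powersetCard (#s - 1), F t = ∑ a ∈ s, F (s.erase a) := by
  refine (sum_nbij (s.erase ·) (fun a ha => ?_) (erase_injOn s) (fun t ht => ?_)
    fun _ _ => rfl).symm
  · exact mem_powersetCard.2 ⟨erase_subset a s, card_erase_of_mem ha⟩
  · obtain ⟨hts, hcard⟩ := mem_powersetCard.1 ht
    obtain ⟨a, hat, rfl⟩ := exists_eq_insert_iff.2 ⟨hts, by have := hs.card_pos; omega⟩
    exact ⟨a, mem_insert_self a t, erase_insert hat⟩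

theorem sum_pow_of_mul_self_eq_zero {A : Type*} [CommSemiring A] {s : Finset α} {f : α → A}
    (hf : ∀ i ∈ s, f i * f i = 0) (m : ℕ) :
    (∑ i ∈ s, f i) ^ m = m.factorial • ∑ t ∈ s.powersetCard m, ∏ i ∈ t, f i := by
  induction s using Finset.induction_on generalizing m with
  | empty =>
    rcases m with _ | k
    · simp
    · simp [powersetCard_eq_empty.2 (card_empty.trans_lt k.succ_pos)]
  | insert a s ha ih =>
    rcases m with _ | k
    · simp
    have hs : ∀ i ∈ s, f i * f i = 0 := fun i hi => hf i (mem_insert_of_mem hi)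
    have hinsert : ∑ t ∈ s.powersetCard k, ∏ i ∈ insert a t, f i =
        f a * ∑ t ∈ s.powersetCard k, ∏ i ∈ t, f i := by
      rw [mul_sum]
      exact sum_congr rfl fun t ht => prod_insert (notMem_mono (mem_powersetCard.1 ht).1 ha)
    rw [sum_insert ha, add_pow_succ_of_mul_self_eq_zero (hf a (mem_insert_self a s)), ih hs,
      ih hs, sum_powersetCard_succ_insert ha, hinsert, smul_add, mul_smul_comm, smul_smul,
      Nat.factorial_succ]

end Finset

theorem Algebra.isMulCommutative_adjoin_range (R : Type*) {A ι : Type*} [CommSemiring R]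
    [Semiring A] [Algebra R A] {g : ι → A} (hcomm : ∀ i j, Commute (g i) (g j)) :
    IsMulCommutative (Algebra.adjoin R (Set.range g)) :=
  Algebra.isMulCommutative_adjoin R <| by
    rintro _ ⟨i, rfl⟩ _ ⟨j, rfl⟩
    exact hcomm i j

namespace ExteriorAlgebra

variable {R M : Type*} [CommRing R] [AddCommGroup M] [Module R M]

theorem ι_mul_ι_eq_neg (x y : M) : ι R x * ι R y = -(ι R y * ι R x) :=
  eq_neg_of_add_eq_zero_left (ι_add_mul_swap x y)

theorem commute_ι_ι_mul_ι (x y z : M) : Commute (ι R x) (ι R y * ι R z) := by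
  rw [Commute, SemiconjBy, ← mul_assoc, ι_mul_ι_eq_neg x y, neg_mul, mul_assoc,
    ι_mul_ι_eq_neg x z, mul_neg, neg_neg, mul_assoc]

theorem ι_mul_ι_mul_ι_self_s2 (x y : M) : ι R y * (ι R x * ι R y) = 0 := by
  rw [(commute_ι_ι_mul_ι y x y).eq, mul_assoc, ι_sq_zero, mul_zero]

theorem ι_mul_ι_mul_self (x y : M) : ι R x * ι R y * (ι R x * ι R y) = 0 := by
  rw [mul_assoc, ι_mul_ι_mul_ι_self_s2, mul_zero]

end ExteriorAlgebra

section OrderedProd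

variable {R M : Type*} [CommRing R] [AddCommGroup M] [Module R M] {n : ℕ}

theorem orderedProd_comp {N F : Type*} [CommMonoid N] [FunLike F N (ExteriorAlgebra R M)]
    [MonoidHomClass F N (ExteriorAlgebra R M)] (φ : F) (G : Fin n → N) (s : Finset (Fin n)) :
    orderedProd s (φ ∘ G) = φ (∏ i ∈ s, G i) := by
  rw [orderedProd, ← List.map_map, ← map_list_prod, ← prod_map_toList,
    ((s.sort_perm_toList (· ≤ ·)).map G).prod_eq]

open scoped IsMulCommutative

variable {g : Fin n → ExteriorAlgebra R M}

theorem sum_pow_eq_factorial_smul_sum_orderedProd (hcomm : ∀ i j, Commute (g i) (g j))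
    (hsq : ∀ i, g i * g i = 0) (s : Finset (Fin n)) (m : ℕ) :
    (∑ i ∈ s, g i) ^ m = m.factorial • ∑ t ∈ s.powersetCard m, orderedProd t g := by
  let S := Algebra.adjoin R (Set.range g)
  have := Algebra.isMulCommutative_adjoin_range R hcomm
  let G : Fin n → S := fun i => ⟨g i, Algebra.subset_adjoin ⟨i, rfl⟩⟩
  have hG : ∀ i ∈ s, G i * G i = 0 := fun i _ => Subtype.ext (hsq i)
  rw [show g = S.val ∘ G from rfl]
  simp only [orderedProd_comp, Function.comp_apply, ← map_sum, ← map_pow,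
    sum_pow_of_mul_self_eq_zero hG, map_nsmul]

theorem orderedProd_eq_mul_orderedProd_erase (hcomm : ∀ i j, Commute (g i) (g j))
    {s : Finset (Fin n)} {j : Fin n} (hj : j ∈ s) :
    orderedProd s g = g j * orderedProd (s.erase j) g := by
  let S := Algebra.adjoin R (Set.range g)
  have := Algebra.isMulCommutative_adjoin_range R hcomm
  let G : Fin n → S := fun i => ⟨g i, Algebra.subset_adjoin ⟨i, rfl⟩⟩
  rw [show g = S.val ∘ G from rfl, orderedProd_comp, orderedProd_comp, ← mul_prod_erase s G hj,
    map_mul, Function.comp_apply]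

end OrderedProd

/-- Expansion of `s' ∧ (∂̄ s')^(n-1)` (proofs of Lemma 3.6 and Theorem B):
`(∑ i, c i • ι (e i)) * (∑ i, ι (w i) * ι (e i)) ^ (n - 1)
  = (n-1)! • ∑ k, c k • (ι (e k) * ∏_{i ≠ k} (ι (w i) * ι (e i)))`. -/
theorem section_power_expansion {R M : Type*} [CommRing R] [AddCommGroup M] [Module R M]
    {n : ℕ} (hn : 1 ≤ n) (c : Fin n → R) (w e : Fin n → M) :
    (∑ i : Fin n, c i • ι R (e i)) * (∑ i : Fin n, ι R (w i) * ι R (e i)) ^ (n - 1) =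
      (n - 1).factorial •
        ∑ k : Fin n, c k •
          (ι R (e k) * orderedProd (Finset.univ.erase k) (fun i => ι R (w i) * ι R (e i))) := by
  set g : Fin n → ExteriorAlgebra R M := fun i => ι R (w i) * ι R (e i)
  have hcomm : ∀ i j, Commute (g i) (g j) := fun i j =>
    (commute_ι_ι_mul_ι _ _ _).mul_left (commute_ι_ι_mul_ι _ _ _)
  have hpow : (∑ i, g i) ^ (n - 1) = (n - 1).factorial • ∑ k, orderedProd (univ.erase k) g := by
    have hsubsets := sum_powersetCard_card_sub_one ⟨⟨0, hn⟩, mem_univ _⟩ (orderedProd · g)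
    rw [card_fin] at hsubsets
    rw [sum_pow_eq_factorial_smul_sum_orderedProd hcomm (fun i => ι_mul_ι_mul_self _ _), hsubsets]
  have hkill : ∀ k j, j ≠ k → ι R (e j) * orderedProd (univ.erase k) g = 0 := fun k j hjk => by
    rw [orderedProd_eq_mul_orderedProd_erase hcomm (mem_erase.2 ⟨hjk, mem_univ j⟩), ← mul_assoc,
      ι_mul_ι_mul_ι_self_s2, zero_mul]
  rw [hpow, mul_smul_comm, mul_sum]
  congr 1
  refine sum_congr rfl fun k _ => ?_
  rw [sum_mul, sum_eq_single_of_mem k (mem_univ k) fun j _ hjk => by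
    rw [smul_mul_assoc, hkill k j hjk, smul_zero], smul_mul_assoc]
end

section
/- Let A be a (not necessarily commutative) ring, s a finite set, and y : s → A a family of elements such that y_i and y_j commute for all i, j ∈ s and y_i^2 = 0 for all i ∈ s. Then for every natural number k, (∑_{i ∈ s} y_i)^k = k! • ∑_{t ⊆ s, |t| = k} ∏_{i ∈ t} y_i, where for each k-element subset t the product ∏_{i ∈ t} y_i is well defined because the factors pairwise commute. -/
/-!
Induct on `s`. Adjoining an element `a` with `y a ^ 2 = 0` to a commuting family with sum `b`
gives `(y a + b) ^ (k + 1) = b ^ (k + 1) + (k + 1) • (y a * b ^ k)`, since every term of the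
binomial expansion with `y a` appearing twice vanishes. Expanding `b ^ (k + 1)` and `b ^ k` by
induction, the two summands are exactly the `(k + 1)`-subsets avoiding `a` and those containing
it, and `(k + 1) • k! = (k + 1)!`.
-/

theorem Commute.add_pow_succ_of_sq_eq_zero {A : Type*} [Semiring A] {x b : A}
    (hxb : Commute x b) (hx : x ^ 2 = 0) (n : ℕ) :
    (x + b) ^ (n + 1) = b ^ (n + 1) + (n + 1) • (x * b ^ n) := by
  induction n with
  | zero => simp [add_comm]
  | succ n ih =>
    have hxx : x * b ^ n * x = 0 := by
      rw [mul_assoc, (hxb.symm.pow_left n).eq, ← mul_assoc, ← sq, hx, zero_mul]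
    calc (x + b) ^ (n + 2) = (b ^ (n + 1) + (n + 1) • (x * b ^ n)) * (x + b) := by
          rw [pow_succ, ih]
      _ = b ^ (n + 2) + (n + 2) • (x * b ^ (n + 1)) := by
          rw [add_mul, mul_add, smul_mul_assoc, mul_add, hxx, zero_add, mul_assoc, ← pow_succ,
            ← pow_succ, ← (hxb.pow_right (n + 1)).eq, succ_nsmul _ (n + 1)]
          abel

theorem Finset.sum_image_insert_noncommProd {ι A : Type*} [DecidableEq ι] [Semiring A]
    (y : ι → A) (hc : ∀ i j, Commute (y i) (y j)) {a : ι} {𝒜 : Finset (Finset ι)}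
    (ha : ∀ t ∈ 𝒜, a ∉ t) :
    ∑ t ∈ 𝒜.image (insert a), t.noncommProd y (fun i _ j _ _ => hc i j) =
      y a * ∑ t ∈ 𝒜, t.noncommProd y (fun i _ j _ _ => hc i j) := by
  rw [sum_image fun t ht u hu h => by
      rw [← erase_insert (ha t ht), ← erase_insert (ha u hu), h], mul_sum]
  exact sum_congr rfl fun t ht => noncommProd_insert_of_notMem _ _ _ _ (ha t ht)

theorem Finset.sum_pow_of_commute_of_sq_eq_zero {ι A : Type*} [DecidableEq ι] [Semiring A]
    (y : ι → A) (hc : ∀ i j, Commute (y i) (y j)) (s : Finset ι)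
    (hsq : ∀ i ∈ s, y i ^ 2 = 0) (k : ℕ) :
    (∑ i ∈ s, y i) ^ k =
      k.factorial • ∑ t ∈ powersetCard k s, t.noncommProd y (fun i _ j _ _ => hc i j) := by
  induction s using Finset.induction_on generalizing k with
  | empty =>
    cases k with
    | zero => simp; rfl
    | succ k => simp [powersetCard_eq_empty.2 (card_empty.trans_lt k.succ_pos)]
  | @insert a s ha ih =>
    cases k with
    | zero => simp; rfl
    | succ k =>
      have hsq' : ∀ i ∈ s, y i ^ 2 = 0 := fun i hi => hsq i (mem_insert_of_mem hi)
      have hdisj : Disjoint (powersetCard (k + 1) s) ((powersetCard k s).image (insert a)) :=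
        disjoint_left.mpr fun t ht ht' => by
          obtain ⟨u, -, rfl⟩ := mem_image.mp ht'
          exact ha ((mem_powersetCard.mp ht).1 (mem_insert_self a u))
      have hnotMem : ∀ t ∈ powersetCard k s, a ∉ t := fun t ht h =>
        ha ((mem_powersetCard.mp ht).1 h)
      rw [sum_insert ha, (Commute.sum_right _ _ _ fun i _ => hc a i).add_pow_succ_of_sq_eq_zero
          (hsq a (mem_insert_self a s)), ih hsq', ih hsq', powersetCard_succ_insert ha,
        sum_union hdisj, sum_image_insert_noncommProd y hc hnotMem, smul_add, mul_smul_comm,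
        smul_smul, Nat.factorial_succ]

/-- Multinomial expansion for pairwise commuting square-zero elements:
`(∑ i ∈ s, y i) ^ k = k! • ∑_{t ⊆ s, |t| = k} ∏_{i ∈ t} y i`. -/
theorem pow_sum_of_sq_zero {α : Type*} (A : Type*) [Ring A]
    (s : Finset α) (y : s → A)
    (hc : ∀ i j : s, Commute (y i) (y j))
    (hsq : ∀ i : s, y i ^ 2 = 0) (k : ℕ) :
    (∑ i : s, y i) ^ k =
      k.factorial •
        ∑ t ∈ Finset.powersetCard k (Finset.univ : Finset s),
          t.noncommProd y (fun i _ j _ _ => hc i j) := by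
  classical
  exact Finset.sum_pow_of_commute_of_sq_eq_zero y hc Finset.univ (fun i _ => hsq i) k
end
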